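/- arXiv:1910.09816 — 4 statements merged into one kernel-verified Lean document; each statement's English description precedes it below -/
import Mathlib

section
/- Let (A,φ) be a PCA over Set. Then φ is the maximal filter (the set of all nonempty subsets of A) if and only if for every assembly X over (A,φ) and every x ∈ |X|, the constant function at x is a morphism of assemblies ∇1 → X (where 1 is a one-element set); equivalently, Γ commutes up to isomorphism with the global sections functors of Asm(A,φ) and of Set. -/
open CategoryTheory

namespace PcaPaper

/-- A partial binary application on `A`. -/
abbrev PApp (A : Type) := A → A → Option A

variable {A B C : Type}

/-- Definedness of the application of inhabited subsets. -/
def SubDef (app : PApp A) (U V : Set A) : Prop :=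
  ∀ a ∈ U, ∀ b ∈ V, (app a b).isSome

/-- Application of subsets. -/
def SubApp (app : PApp A) (U V : Set A) : Set A :=
  {c | ∃ a ∈ U, ∃ b ∈ V, app a b = some c}

/-- Terms with `n` variables, built from variables by application. -/
inductive Term (n : ℕ) : Type
  | var : Fin n → Term n
  | op : Term n → Term n → Term n

/-- Evaluation of a term at a vector of elements, as a partial function. -/
def Term.eval (app : PApp A) : {n : ℕ} → Term n → (Fin n → A) → Option A
  | _, .var i, ρ => some (ρ i)
  | _, .op s t, ρ => (Term.eval app s ρ).bind fun x => (Term.eval app t ρ).bind fun y => app x y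

/-- Evaluation of a term at a vector of subsets. -/
def Term.subEval (app : PApp A) : {n : ℕ} → Term n → (Fin n → Set A) → Set A
  | _, .var i, ρ => ρ i
  | _, .op s t, ρ => SubApp app (Term.subEval app s ρ) (Term.subEval app t ρ)

/-- Definedness of the evaluation of a term at a vector of subsets. -/
def Term.subDef (app : PApp A) : {n : ℕ} → Term n → (Fin n → Set A) → Prop
  | _, .var _, _ => True
  | _, .op s t, ρ => Term.subDef app s ρ ∧ Term.subDef app t ρ ∧
      SubDef app (Term.subEval app s ρ) (Term.subEval app t ρ)

/-- `r · a 0 · … · a (k-1)`, associated to the left. -/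
def appVec (app : PApp A) (r : A) : (k : ℕ) → (Fin k → A) → Option A
  | 0, _ => some r
  | k + 1, a => (appVec app r k fun i => a i.castSucc).bind fun s => app s (a (Fin.last k))

/-- `U` realizes `λ x₀ … xₙ. t`. -/
def Realizes (app : PApp A) (U : Set A) {n : ℕ} (t : Term (n + 1)) : Prop :=
  ∀ r ∈ U, ∀ a : Fin (n + 1) → A,
    (appVec app r n fun i => a i.castSucc).isSome ∧
    ∀ b, Term.eval app t a = some b → appVec app r (n + 1) a = some b

/-- A filter of inhabited subsets on a partial applicative structure. -/
structure IsPcaFilter (app : PApp A) (φ : Set (Set A)) : Prop where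
  nonempty : ∀ U ∈ φ, U.Nonempty
  upward : ∀ U ∈ φ, ∀ V : Set A, U ⊆ V → V ∈ φ
  appClosed : ∀ U ∈ φ, ∀ V ∈ φ, SubDef app U V → SubApp app U V ∈ φ

/-- Combinatorial completeness of a set of subsets. -/
def CombComplete (app : PApp A) (G : Set (Set A)) : Prop :=
  ∀ (n : ℕ) (t : Term (n + 1)), ∃ U ∈ G, Realizes app U t

/-- The least filter containing `G`. -/
def genFilter (app : PApp A) (G : Set (Set A)) : Set (Set A) :=
  ⋂₀ {ψ | IsPcaFilter app ψ ∧ G ⊆ ψ}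

/-- A (relative) PCA over the base category `Set`: a nonempty set with a partial
binary application and a combinatorially complete filter of inhabited subsets. -/
structure PCA (A : Type) where
  app : PApp A
  nonemptyCarrier : Nonempty A
  filt : Set (Set A)
  isFilter : IsPcaFilter app filt
  complete : CombComplete app filt

/- ### Helper lemmas -/

lemma isSome_bind_left {α β : Type} {o : Option α} {f : α → Option β}
    (h : (o.bind f).isSome) : o.isSome := by
  cases o <;> simp_all

lemma appVec_two_pre (app : PApp A) (r u v x : A) :
    (appVec app r 2 fun i => (![u, v, x] : Fin 3 → A) i.castSucc)
      = (app r u).bind fun s => app s v := rfl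

lemma appVec_three_cons (app : PApp A) (r u v x : A) :
    appVec app r (2 + 1) ![u, v, x]
      = ((app r u).bind fun s => app s v).bind fun s => app s x := rfl

lemma eval_comp_term (app : PApp A) (u v x : A) :
    Term.eval app (Term.op (.var 1) (.op (.var 0) (.var 2))) ![u, v, x]
      = (app u x).bind fun y => app v y := by
  simp [Term.eval]

lemma eval_app2_term (app : PApp A) (u v x : A) :
    Term.eval app (Term.op (.op (.var 0) (.var 1)) (.var 2)) ![u, v, x]
      = (app u v).bind fun d => app d x := by
  simp [Term.eval]

lemma filt_nonempty (P : PCA A) : ∃ U, U ∈ P.filt := by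
  obtain ⟨U, hU, -⟩ := P.complete 0 (.var 0)
  exact ⟨U, hU⟩

lemma univ_mem_filt (P : PCA A) : (Set.univ : Set A) ∈ P.filt := by
  obtain ⟨U, hU⟩ := filt_nonempty P
  exact P.isFilter.upward U hU _ (Set.subset_univ U)

lemma exists_ireal (P : PCA A) :
    ∃ U ∈ P.filt, ∀ r ∈ U, ∀ a : A, P.app r a = some a := by
  obtain ⟨U, hU, hreal⟩ := P.complete 0 (.var 0)
  refine ⟨U, hU, fun r hr a => ?_⟩
  have h := (hreal r hr fun _ => a).2 a (by simp [Term.eval])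
  simpa [appVec] using h

lemma realizes3_chain (P : PCA A) {T : Set A} {t : Term (2 + 1)}
    (hreal : Realizes P.app T t) {r : A} (hr : r ∈ T) (u v : A) :
    ∃ s w, P.app r u = some s ∧ P.app s v = some w := by
  have h1 : ((P.app r u).bind fun s => P.app s v).isSome := by
    have h := (hreal r hr ![u, v, v]).1
    rwa [appVec_two_pre] at h
  cases hru : P.app r u with
  | none => rw [hru] at h1; simp at h1
  | some s =>
    rw [hru] at h1
    simp only [Option.bind_some] at h1
    obtain ⟨w, hw⟩ := Option.isSome_iff_exists.mp h1
    exact ⟨s, w, rfl, hw⟩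

lemma exists_tracker3 (P : PCA A) (t : Term (2 + 1)) {U V : Set A}
    (hU : U ∈ P.filt) (hV : V ∈ P.filt) :
    ∃ W ∈ P.filt, ∀ w ∈ W, ∃ u ∈ U, ∃ v ∈ V,
      ∀ x c : A, Term.eval P.app t ![u, v, x] = some c → P.app w x = some c := by
  obtain ⟨T, hT, hreal⟩ := P.complete 2 t
  have hdef1 : SubDef P.app T U := by
    intro r hr u _
    obtain ⟨s, w, hs, -⟩ := realizes3_chain P hreal hr u u
    simp [hs]
  have hTU := P.isFilter.appClosed T hT U hU hdef1
  have hdef2 : SubDef P.app (SubApp P.app T U) V := by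
    rintro s ⟨r, hr, u, hu, hru⟩ v _
    obtain ⟨s', w, hs', hw⟩ := realizes3_chain P hreal hr u v
    rw [hru] at hs'
    injection hs' with h
    subst h
    simp [hw]
  refine ⟨SubApp P.app (SubApp P.app T U) V,
    P.isFilter.appClosed _ hTU V hV hdef2, ?_⟩
  rintro w ⟨s, ⟨r, hr, u, hu, hru⟩, v, hv, hsv⟩
  refine ⟨u, hu, v, hv, fun x c hc => ?_⟩
  have h2 : appVec P.app r (2 + 1) ![u, v, x] = some c := (hreal r hr ![u, v, x]).2 c hc
  rw [appVec_three_cons, hru] at h2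
  simp only [Option.bind_some] at h2
  rw [hsv] at h2
  simpa using h2

/- ### Assemblies -/

/-- An assembly over a PCA `(A, φ)`. -/
structure Asm {A : Type} (P : PCA A) : Type 1 where
  carrier : Type
  E : carrier → A → Prop
  total : ∀ x, ∃ a, E x a

/-- `U` tracks the function `f` between (the carriers of) two assemblies. -/
def Tracks (P : PCA A) {X Y : Asm P} (U : Set A) (f : X.carrier → Y.carrier) : Prop :=
  ∀ x a r, X.E x a → r ∈ U → ∃ b, P.app r a = some b ∧ Y.E (f x) b

/-- The category of assemblies over a PCA. -/
instance asmCategory (P : PCA A) : Category (Asm P) where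
  Hom X Y := {f : X.carrier → Y.carrier // ∃ U ∈ P.filt, Tracks P U f}
  id X := ⟨fun x => x, by
    obtain ⟨U, hU, hI⟩ := exists_ireal P
    exact ⟨U, hU, fun x a r hx hr => ⟨a, hI r hr a, hx⟩⟩⟩
  comp {X Y Z} f g := ⟨fun x => g.1 (f.1 x), by
    obtain ⟨U, hU, hf⟩ := f.2
    obtain ⟨V, hV, hg⟩ := g.2
    obtain ⟨W, hW, hkey⟩ := exists_tracker3 P
      (Term.op (.var 1) (.op (.var 0) (.var 2))) hU hV
    refine ⟨W, hW, fun x a w hx hw => ?_⟩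
    obtain ⟨u, hu, v, hv, key⟩ := hkey w hw
    obtain ⟨b, hb, hYb⟩ := hf x a u hx hu
    obtain ⟨c, hc, hZc⟩ := hg (f.1 x) b v hYb hv
    refine ⟨c, key a c ?_, hZc⟩
    rw [eval_comp_term, hb]
    simpa using hc⟩
  id_comp f := Subtype.ext rfl
  comp_id f := Subtype.ext rfl
  assoc f g h := Subtype.ext rfl

/-- The global-sections-like functor `Γ : Asm(A,φ) ⥤ Set`. -/
def Gam (P : PCA A) : Asm P ⥤ Type where
  obj X := X.carrier
  map f := TypeCat.ofHom f.1
  map_id _ := rfl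
  map_comp _ _ := rfl

/-- The constant-object assembly `∇ Y`. -/
def nablaObj (P : PCA A) (Y : Type) : Asm P where
  carrier := Y
  E := fun _ _ => True
  total := fun _ => P.nonemptyCarrier.elim fun a => ⟨a, trivial⟩

/-- The functor `∇ : Set ⥤ Asm(A,φ)`. -/
def Nab (P : PCA A) : Type ⥤ Asm P where
  obj Y := nablaObj P Y
  map {Y Z} f := ⟨f, by
    obtain ⟨U, hU, hI⟩ := exists_ireal P
    exact ⟨U, hU, fun y a r _ hr => ⟨a, hI r hr a, trivial⟩⟩⟩
  map_id _ := Subtype.ext rfl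
  map_comp _ _ := Subtype.ext rfl

/- ### Applicative morphisms -/

/-- The image of a subset under a relation. -/
def relImage (f : A → B → Prop) (V : Set A) : Set B :=
  {b | ∃ a ∈ V, f a b}

/-- `U` tracks the relation `f` as an applicative (pre)morphism. -/
def Tracks₂ (appA : PApp A) (appB : PApp B) (U : Set B) (f : A → B → Prop) : Prop :=
  ∀ a a' c, appA a a' = some c → ∀ b b', f a b → f a' b' → ∀ r ∈ U,
    ∃ d e, appB r b = some d ∧ appB d b' = some e ∧ f c e

/-- `f ⊆ A × B` is an applicative morphism `(A,φ) → (B,ψ)`. -/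
structure IsAppMor (appA : PApp A) (φ : Set (Set A)) (appB : PApp B) (ψ : Set (Set B))
    (f : A → B → Prop) : Prop where
  total : ∀ a, ∃ b, f a b
  tracked : ∃ U ∈ ψ, Tracks₂ appA appB U f
  image : ∀ V ∈ φ, relImage f V ∈ ψ

/-- The preorder `f ≤ f'` on relations `A × B`, relative to `(B,ψ)`. -/
def RelLe (appB : PApp B) (ψ : Set (Set B)) (f f' : A → B → Prop) : Prop :=
  ∃ U ∈ ψ, ∀ a b, f a b → ∀ r ∈ U, ∃ c, appB r b = some c ∧ f' a c

/-- Relational composition: `(RelComp g f) a c ↔ ∃ b, f a b ∧ g b c`. -/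
def RelComp (g : B → C → Prop) (f : A → B → Prop) : A → C → Prop :=
  fun a c => ∃ b, f a b ∧ g b c

/-- The diagonal (identity) relation `δ_A`. -/
def relId (A : Type) : A → A → Prop := fun a b => a = b

/- ### The functor Asm(f) induced by an applicative morphism -/

/-- The action of an applicative morphism on an assembly. -/
def asmObj (P : PCA A) (Q : PCA B) (f : A → B → Prop) (htot : ∀ a, ∃ b, f a b)
    (X : Asm P) : Asm Q where
  carrier := X.carrier
  E := fun x b => ∃ a, X.E x a ∧ f a b
  total := fun x => by
    obtain ⟨a, ha⟩ := X.total x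
    obtain ⟨b, hb⟩ := htot a
    exact ⟨b, a, ha, hb⟩

lemma tracks_asmMap {P : PCA A} {Q : PCA B} {f : A → B → Prop}
    (hf : IsAppMor P.app P.filt Q.app Q.filt f) {X Y : Asm P}
    (g : X.carrier → Y.carrier) (hg : ∃ U ∈ P.filt, Tracks P U g) :
    ∃ W ∈ Q.filt,
      Tracks Q (X := asmObj P Q f hf.total X) (Y := asmObj P Q f hf.total Y) W g := by
  obtain ⟨U, hU, hgU⟩ := hg
  obtain ⟨T, hT, hfT⟩ := hf.tracked
  have hfU : relImage f U ∈ Q.filt := hf.image U hU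
  obtain ⟨W, hW, hkey⟩ := exists_tracker3 Q
    (Term.op (.op (.var 0) (.var 1)) (.var 2)) hT hfU
  refine ⟨W, hW, ?_⟩
  rintro x b w ⟨a, hxa, hab⟩ hw
  obtain ⟨v, hv, y, hy, key⟩ := hkey w hw
  obtain ⟨u, hu, huy⟩ := hy
  obtain ⟨a', ha', hEa'⟩ := hgU x a u hxa hu
  obtain ⟨d, e, hd, he, hfe⟩ := hfT u a a' ha' y b huy hab v hv
  refine ⟨e, key b e ?_, a', hEa', hfe⟩
  rw [eval_app2_term, hd]
  simpa using he

/-- The functor `Asm(f) : Asm(A,φ) ⥤ Asm(B,ψ)` induced by an applicative morphism. -/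
def asmFunctor {P : PCA A} {Q : PCA B} {f : A → B → Prop}
    (hf : IsAppMor P.app P.filt Q.app Q.filt f) : Asm P ⥤ Asm Q where
  obj X := asmObj P Q f hf.total X
  map {X Y} g := ⟨g.1, tracks_asmMap hf g.1 g.2⟩
  map_id _ := Subtype.ext rfl
  map_comp _ _ := Subtype.ext rfl
/- ### Products of PASs -/

/-- Coordinatewise partial application on `A × B`. -/
def prodApp (appA : PApp A) (appB : PApp B) : PApp (A × B) := fun p q =>
  (appA p.1 q.1).bind fun x => (appB p.2 q.2).bind fun y => some (x, y)

/-- The set `φ × ψ` of rectangles `U ×ˢ V` with `U ∈ φ` and `V ∈ ψ`. -/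
def prodFiltSet (φ : Set (Set A)) (ψ : Set (Set B)) : Set (Set (A × B)) :=
  {W | ∃ U ∈ φ, ∃ V ∈ ψ, W = U ×ˢ V}

/-- The filter `⟨φ × ψ⟩` of the pseudocoproduct of two PCAs. -/
def prodFilt (P : PCA A) (Q : PCA B) : Set (Set (A × B)) :=
  genFilter (prodApp P.app Q.app) (prodFiltSet P.filt Q.filt)

/- ### Quasi-surjectivity and computational density -/

/-- A quasi-surjective applicative morphism. -/
def QuasiSurjective (P : PCA A) (Q : PCA B) (f : A → B → Prop) : Prop :=
  ∃ N ∈ Q.filt, ∀ U ∈ Q.filt, ∃ V ∈ P.filt,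
    ∀ n ∈ N, ∀ b ∈ relImage f V, ∃ c, Q.app n b = some c ∧ c ∈ U

/-- A computationally dense applicative morphism. -/
def CompDense (P : PCA A) (Q : PCA B) (f : A → B → Prop) : Prop :=
  ∃ M ∈ Q.filt, ∀ U ∈ Q.filt, ∃ V ∈ P.filt,
    (∀ r ∈ V, ∀ a : A, (P.app r a).isSome) ∧
    (∀ r ∈ V, ∀ a a', P.app r a = some a' →
      (∀ u ∈ U, ∀ b, f a b → (Q.app u b).isSome) →
      ∀ m ∈ M, ∀ b', f a' b' →
        ∃ c, Q.app m b' = some c ∧ ∃ u ∈ U, ∃ b'', f a b'' ∧ Q.app u b'' = some c)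

/- ### Slicing: fiberwise filters over an assembly -/

/-- Fiberwise definedness of the application of two subsets of `I × A`. -/
def fibSubDef (app : PApp A) {I : Type} (U V : Set (I × A)) : Prop :=
  ∀ i r s, (i, r) ∈ U → (i, s) ∈ V → (app r s).isSome

/-- Fiberwise application of two subsets of `I × A`. -/
def fibSubApp (app : PApp A) {I : Type} (U V : Set (I × A)) : Set (I × A) :=
  {p | ∃ r s, (p.1, r) ∈ U ∧ (p.1, s) ∈ V ∧ app r s = some p.2}

/-- A fiberwise filter over `I`. -/
structure IsFibFilter (app : PApp A) (I : Type) (Ψ : Set (Set (I × A))) : Prop where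
  inhab : ∀ U ∈ Ψ, ∀ i : I, ∃ a, (i, a) ∈ U
  upward : ∀ U ∈ Ψ, ∀ V : Set (I × A), U ⊆ V → V ∈ Ψ
  appClosed : ∀ U ∈ Ψ, ∀ V ∈ Ψ, fibSubDef app U V → fibSubApp app U V ∈ Ψ

/-- The filter `φ_I` of the slice PCA over an assembly `I`: the least fiberwise filter
containing `E_I` and all sets `|I| × V` for `V ∈ φ`. -/
def sliceFilt (P : PCA A) (I : Asm P) : Set (Set (I.carrier × A)) :=
  ⋂₀ {Ψ | IsFibFilter P.app I.carrier Ψ ∧ {p : I.carrier × A | I.E p.1 p.2} ∈ Ψ ∧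
      ∀ V ∈ P.filt, {p : I.carrier × A | p.2 ∈ V} ∈ Ψ}

lemma sliceFilt_upward {P : PCA A} {I : Asm P} {U V : Set (I.carrier × A)}
    (hU : U ∈ sliceFilt P I) (hUV : U ⊆ V) : V ∈ sliceFilt P I := by
  rw [sliceFilt, Set.mem_sInter] at hU ⊢
  intro Ψ hΨ
  exact hΨ.1.upward U (hU Ψ hΨ) V hUV

lemma sliceFilt_appClosed {P : PCA A} {I : Asm P} {U V : Set (I.carrier × A)}
    (hU : U ∈ sliceFilt P I) (hV : V ∈ sliceFilt P I) (hdef : fibSubDef P.app U V) :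
    fibSubApp P.app U V ∈ sliceFilt P I := by
  rw [sliceFilt, Set.mem_sInter] at hU hV ⊢
  intro Ψ hΨ
  exact hΨ.1.appClosed U (hU Ψ hΨ) V (hV Ψ hΨ) hdef

lemma base_mem_sliceFilt {P : PCA A} {I : Asm P} {V : Set A} (hV : V ∈ P.filt) :
    {p : I.carrier × A | p.2 ∈ V} ∈ sliceFilt P I := by
  rw [sliceFilt, Set.mem_sInter]
  intro Ψ hΨ
  exact hΨ.2.2 V hV

lemma EI_mem_sliceFilt (P : PCA A) (I : Asm P) :
    {p : I.carrier × A | I.E p.1 p.2} ∈ sliceFilt P I := by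
  rw [sliceFilt, Set.mem_sInter]
  intro Ψ hΨ
  exact hΨ.2.1

lemma exists_fib_tracker3 (P : PCA A) (I : Asm P) (t : Term (2 + 1))
    {U V : Set (I.carrier × A)} (hU : U ∈ sliceFilt P I) (hV : V ∈ sliceFilt P I) :
    ∃ W ∈ sliceFilt P I, ∀ i w, (i, w) ∈ W → ∃ u v, (i, u) ∈ U ∧ (i, v) ∈ V ∧
      ∀ x c : A, Term.eval P.app t ![u, v, x] = some c → P.app w x = some c := by
  obtain ⟨T, hT, hreal⟩ := P.complete 2 t
  have hT' : {p : I.carrier × A | p.2 ∈ T} ∈ sliceFilt P I := base_mem_sliceFilt hT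
  have hdef1 : fibSubDef P.app {p : I.carrier × A | p.2 ∈ T} U := by
    intro i r s hr _
    obtain ⟨s', w', h1, -⟩ := realizes3_chain P hreal hr s s
    simp [h1]
  have h1mem := sliceFilt_appClosed hT' hU hdef1
  have hdef2 : fibSubDef P.app (fibSubApp P.app {p : I.carrier × A | p.2 ∈ T} U) V := by
    rintro i s v ⟨r, u, hr, hu, hru⟩ _
    obtain ⟨s', w', hs', hw'⟩ := realizes3_chain P hreal hr u v
    rw [hru] at hs'
    injection hs' with h
    subst h
    simp [hw']
  refine ⟨_, sliceFilt_appClosed h1mem hV hdef2, ?_⟩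
  rintro i w ⟨s, v, ⟨r, u, hr, hu, hru⟩, hv, hsv⟩
  refine ⟨u, v, hu, hv, fun x c hc => ?_⟩
  have h2 : appVec P.app r (2 + 1) ![u, v, x] = some c := (hreal r hr ![u, v, x]).2 c hc
  rw [appVec_three_cons, hru] at h2
  simp only [Option.bind_some] at h2
  rw [hsv] at h2
  simpa using h2

/- ### The category of assemblies over the slice PCA `(A,φ)/I` -/

/-- Assemblies over the slice PCA `(A,φ)/I`. -/
structure SliceAsm (P : PCA A) (I : Asm P) : Type 1 where
  carrier : Type
  k : carrier → I.carrier
  E : carrier → A → Prop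
  total : ∀ x, ∃ a, E x a

/-- Fiberwise tracking for morphisms of assemblies over `(A,φ)/I`. -/
def SliceTracks (P : PCA A) (I : Asm P) {X Y : SliceAsm P I} (U : Set (I.carrier × A))
    (f : X.carrier → Y.carrier) : Prop :=
  ∀ x a r, X.E x a → (X.k x, r) ∈ U → ∃ b, P.app r a = some b ∧ Y.E (f x) b

instance sliceAsmCategory (P : PCA A) (I : Asm P) : Category (SliceAsm P I) where
  Hom X Y := {f : X.carrier → Y.carrier //
    (∀ x, Y.k (f x) = X.k x) ∧ ∃ U ∈ sliceFilt P I, SliceTracks P I U f}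
  id X := ⟨fun x => x, fun _ => rfl, by
    obtain ⟨U, hU, hI⟩ := exists_ireal P
    exact ⟨{p | p.2 ∈ U}, base_mem_sliceFilt hU,
      fun x a r hx hr => ⟨a, hI r hr a, hx⟩⟩⟩
  comp {X Y Z} f g := ⟨fun x => g.1 (f.1 x), fun x => (g.2.1 (f.1 x)).trans (f.2.1 x), by
    obtain ⟨U, hU, hf⟩ := f.2.2
    obtain ⟨V, hV, hg⟩ := g.2.2
    obtain ⟨W, hW, hkey⟩ := exists_fib_tracker3 P I
      (Term.op (.var 1) (.op (.var 0) (.var 2))) hU hV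
    refine ⟨W, hW, fun x a w hx hw => ?_⟩
    obtain ⟨u, v, hu, hv, key⟩ := hkey (X.k x) w hw
    obtain ⟨b, hb, hYb⟩ := hf x a u hx hu
    have hv' : (Y.k (f.1 x), v) ∈ V := by rw [f.2.1 x]; exact hv
    obtain ⟨c, hc, hZc⟩ := hg (f.1 x) b v hYb hv'
    refine ⟨c, key a c ?_, hZc⟩
    rw [eval_comp_term, hb]
    simpa using hc⟩
  id_comp f := Subtype.ext rfl
  comp_id f := Subtype.ext rfl
  assoc f g h := Subtype.ext rfl

/- ### Families of assemblies (products of PCAs) -/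

/-- The category of families of assemblies over a family of PCAs, with uniformly
tracked families of morphisms; this is the category of assemblies over the product
PCA of the family, taken over the product of the base categories. -/
structure FamAsm {I : Type} {A : I → Type} (P : ∀ i, PCA (A i)) : Type 1 where
  obj : ∀ i, Asm (P i)

instance famAsmCategory {I : Type} {A : I → Type} (P : ∀ i, PCA (A i)) :
    Category (FamAsm P) where
  Hom X Y := {f : ∀ i, (X.obj i).carrier → (Y.obj i).carrier //
    ∃ U : ∀ i, Set (A i), (∀ i, U i ∈ (P i).filt) ∧ ∀ i, Tracks (P i) (U i) (f i)}
  id X := ⟨fun i x => x, by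
    choose U hU using fun i => exists_ireal (P i)
    exact ⟨U, fun i => (hU i).1, fun i x a r hx hr => ⟨a, (hU i).2 r hr a, hx⟩⟩⟩
  comp {X Y Z} f g := ⟨fun i x => g.1 i (f.1 i x), by
    obtain ⟨U, hU, hf⟩ := f.2
    obtain ⟨V, hV, hg⟩ := g.2
    choose W hW using fun i => exists_tracker3 (P i)
      (Term.op (.var 1) (.op (.var 0) (.var 2))) (hU i) (hV i)
    refine ⟨W, fun i => (hW i).1, fun i x a w hx hw => ?_⟩
    obtain ⟨u, hu, v, hv, key⟩ := (hW i).2 w hw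
    obtain ⟨b, hb, hYb⟩ := hf i x a u hx hu
    obtain ⟨c, hc, hZc⟩ := hg i (f.1 i x) b v hYb hv
    refine ⟨c, key a c ?_, hZc⟩
    rw [eval_comp_term, hb]
    simpa using hc⟩
  id_comp f := Subtype.ext rfl
  comp_id f := Subtype.ext rfl
  assoc f g h := Subtype.ext rfl

/-! The constant map at `x` out of `∇1` is a morphism exactly when the realizer set
`E_X(x)` lies in `φ`: a tracker `U` gives `U · A ⊆ E_X(x)`, and conversely `K · E_X(x)` tracks
it, `K` realizing `λ x₀ x₁. x₀`. Every nonempty set is `E_X(x)` for a one-point assembly, so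
this holds for all `X` and `x` iff `φ` contains all nonempty sets. -/

variable {P : PCA A}

lemma exists_mem_filt_forall_app_eq_const {V : Set A} (hV : V ∈ P.filt) :
    ∃ W ∈ P.filt, ∀ w ∈ W, ∃ c ∈ V, ∀ b, P.app w b = some c := by
  obtain ⟨K, hK, hreal⟩ := P.complete 1 (.var 0)
  have hdef : SubDef P.app K V := fun r hr c _ => by
    simpa [appVec] using (hreal r hr ![c, c]).1
  refine ⟨SubApp P.app K V, P.isFilter.appClosed K hK V hV hdef, ?_⟩
  rintro w ⟨r, hr, c, hc, hrc⟩
  refine ⟨c, hc, fun b => ?_⟩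
  have hrcb := (hreal r hr ![c, b]).2 c (by simp [Term.eval])
  simpa [appVec, hrc] using hrcb

lemma exists_tracks_const_of_mem_filt {Y : Type} (X : Asm P) (x : X.carrier)
    (hx : {a | X.E x a} ∈ P.filt) :
    ∃ U ∈ P.filt, Tracks P (X := nablaObj P Y) (Y := X) U fun _ => x := by
  obtain ⟨W, hW, hconst⟩ := exists_mem_filt_forall_app_eq_const hx
  refine ⟨W, hW, fun _ b w _ hw => ?_⟩
  obtain ⟨c, hc, hwc⟩ := hconst w hw
  exact ⟨c, hwc b, hc⟩

lemma mem_filt_of_tracks_const {Y : Type} (y : Y) (X : Asm P) (x : X.carrier) {U : Set A}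
    (hU : U ∈ P.filt) (htr : Tracks P (X := nablaObj P Y) (Y := X) U fun _ => x) :
    {a | X.E x a} ∈ P.filt := by
  have hdef : SubDef P.app U Set.univ := fun r hr b _ => by
    obtain ⟨c, hc, -⟩ := htr y b r trivial hr
    simp [hc]
  have hsub : SubApp P.app U Set.univ ⊆ {a | X.E x a} := by
    rintro c ⟨r, hr, b, -, hrb⟩
    obtain ⟨c', hc', hxc'⟩ := htr y b r trivial hr
    rw [hrb, Option.some_inj] at hc'
    exact hc' ▸ hxc'
  exact P.isFilter.upward _ (P.isFilter.appClosed U hU _ (univ_mem_filt P) hdef) _ hsub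

lemma exists_tracks_const_iff {Y : Type} [Nonempty Y] (X : Asm P) (x : X.carrier) :
    (∃ U ∈ P.filt, Tracks P (X := nablaObj P Y) (Y := X) U fun _ => x) ↔
      {a | X.E x a} ∈ P.filt :=
  ⟨fun ⟨_, hU, htr⟩ => mem_filt_of_tracks_const (Classical.arbitrary Y) X x hU htr,
    exists_tracks_const_of_mem_filt X x⟩

def punitAsm (U : Set A) (hU : U.Nonempty) : Asm P where
  carrier := PUnit
  E _ a := a ∈ U
  total _ := hU

/-- `(A,φ)` is absolute (i.e. `φ` is the maximal filter of all nonempty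
subsets) iff for every assembly `X` and every `x ∈ |X|`, the constant function at `x` is a
morphism of assemblies `∇1 → X`; equivalently, `Γ` commutes with global sections. -/
theorem statement2 (A : Type) (P : PCA A) :
    P.filt = {U : Set A | U.Nonempty} ↔
      ∀ (X : Asm P) (x : X.carrier),
        ∃ U ∈ P.filt, Tracks P (X := nablaObj P PUnit) (Y := X) U fun _ => x := by
  simp only [exists_tracks_const_iff]
  constructor
  · intro hmax X x
    rw [hmax]
    exact X.total x
  · intro hrealized
    ext U
    refine ⟨P.isFilter.nonempty U, fun hU => ?_⟩
    exact hrealized (punitAsm (P := P) U hU) PUnit.unit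

end PcaPaper
end

section
/- Let A be a PAS over Set, let G be a combinatorially complete set of nonempty subsets of A, let (B,ψ) be a PCA over Set, and let f ⊆ A × B be an applicative premorphism from A to (B,ψ) (i.e., f is total and some U ∈ ψ tracks f). Then f is an applicative morphism (A,⟨G⟩) → (B,ψ) if and only if f(U) ∈ ψ for every U ∈ G. -/
open CategoryTheory

namespace PcaPaper

variable {A B C : Type}

lemma subset_genFilter (app : PApp A) (G : Set (Set A)) : G ⊆ genFilter app G :=
  fun _ hU => Set.mem_sInter.mpr fun _ hΨ => hΨ.2 hU

lemma genFilter_subset {app : PApp A} {G φ : Set (Set A)} (hφ : IsPcaFilter app φ)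
    (hG : G ⊆ φ) : genFilter app G ⊆ φ :=
  Set.sInter_subset_of_mem ⟨hφ, hG⟩

lemma relImage_mono (f : A → B → Prop) {V W : Set A} (h : V ⊆ W) :
    relImage f V ⊆ relImage f W :=
  fun _ ⟨a, ha, hab⟩ => ⟨a, h ha, hab⟩

def relComapFilt (f : A → B → Prop) (ψ : Set (Set B)) : Set (Set A) :=
  {V | relImage f V ∈ ψ}

section Tracking

variable {appA : PApp A} {appB : PApp B} {U : Set B} {f : A → B → Prop} {V W : Set A}

lemma Tracks₂.exists_of_subDef (hU : Tracks₂ appA appB U f) (hdef : SubDef appA V W)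
    {r b b' : B} (hr : r ∈ U) (hb : b ∈ relImage f V) (hb' : b' ∈ relImage f W) :
    ∃ c ∈ SubApp appA V W, ∃ d e, appB r b = some d ∧ appB d b' = some e ∧ f c e := by
  obtain ⟨a, ha, hab⟩ := hb
  obtain ⟨a', ha', hab'⟩ := hb'
  obtain ⟨c, hc⟩ := Option.isSome_iff_exists.mp (hdef a ha a' ha')
  obtain ⟨d, e, hd, he, hce⟩ := hU a a' c hc b b' hab hab' r hr
  exact ⟨c, ⟨a, ha, a', ha', hc⟩, d, e, hd, he, hce⟩

lemma Tracks₂.subDef_left (hU : Tracks₂ appA appB U f) (hdef : SubDef appA V W)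
    (hW : (relImage f W).Nonempty) : SubDef appB U (relImage f V) := by
  intro r hr b hb
  obtain ⟨b', hb'⟩ := hW
  obtain ⟨-, -, d, -, hd, -⟩ := hU.exists_of_subDef hdef hr hb hb'
  simp [hd]

lemma Tracks₂.subDef_right (hU : Tracks₂ appA appB U f) (hdef : SubDef appA V W) :
    SubDef appB (SubApp appB U (relImage f V)) (relImage f W) := by
  rintro d ⟨r, hr, b, hb, hrb⟩ b' hb'
  obtain ⟨-, -, d', e, hd', he, -⟩ := hU.exists_of_subDef hdef hr hb hb'
  rw [hrb, Option.some_inj] at hd'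
  simp [hd', he]

lemma Tracks₂.subApp_subset (hU : Tracks₂ appA appB U f) (hdef : SubDef appA V W) :
    SubApp appB (SubApp appB U (relImage f V)) (relImage f W) ⊆
      relImage f (SubApp appA V W) := by
  rintro e ⟨d, ⟨r, hr, b, hb, hrb⟩, b', hb', hdb'⟩
  obtain ⟨c, hc, d', e', hd', he', hce'⟩ := hU.exists_of_subDef hdef hr hb hb'
  rw [hrb, Option.some_inj] at hd'
  rw [← hd', hdb', Option.some_inj] at he'
  exact ⟨c, hc, he' ▸ hce'⟩

end Tracking

lemma isPcaFilter_relComapFilt {appA : PApp A} {appB : PApp B} {ψ : Set (Set B)}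
    {U : Set B} {f : A → B → Prop} (hψ : IsPcaFilter appB ψ) (hUψ : U ∈ ψ)
    (hU : Tracks₂ appA appB U f) : IsPcaFilter appA (relComapFilt f ψ) where
  nonempty V hV := by
    obtain ⟨-, a, ha, -⟩ := hψ.nonempty _ hV
    exact ⟨a, ha⟩
  upward V hV W hVW := hψ.upward _ hV _ (relImage_mono f hVW)
  appClosed V hV W hW hdef := by
    have hUV := hψ.appClosed U hUψ _ hV (hU.subDef_left hdef (hψ.nonempty _ hW))
    have hUVW := hψ.appClosed _ hUV _ hW (hU.subDef_right hdef)
    exact hψ.upward _ hUVW _ (hU.subApp_subset hdef)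

theorem statement4_general (A B : Type) (appA : PApp A) (G : Set (Set A))
    (Q : PCA B) (f : A → B → Prop)
    (htotal : ∀ a, ∃ b, f a b)
    (htracked : ∃ U ∈ Q.filt, Tracks₂ appA Q.app U f) :
    IsAppMor appA (genFilter appA G) Q.app Q.filt f ↔
      ∀ U ∈ G, relImage f U ∈ Q.filt := by
  refine ⟨fun hf U hU => hf.image U (subset_genFilter appA G hU), fun himage => ?_⟩
  obtain ⟨T, hT, hTf⟩ := htracked
  exact ⟨htotal, ⟨T, hT, hTf⟩,
    genFilter_subset (isPcaFilter_relComapFilt Q.isFilter hT hTf) himage⟩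

/-- If `G` is a combinatorially complete set of nonempty subsets of a PAS
`A`, `(B,ψ)` is a PCA and `f` is an applicative premorphism `A → (B,ψ)` (total and tracked),
then `f` is an applicative morphism `(A,⟨G⟩) → (B,ψ)` iff `f(U) ∈ ψ` for every `U ∈ G`. -/
theorem statement4 (A B : Type) (hA : Nonempty A) (appA : PApp A) (G : Set (Set A))
    (hGne : ∀ U ∈ G, U.Nonempty) (hG : CombComplete appA G)
    (Q : PCA B) (f : A → B → Prop)
    (htotal : ∀ a, ∃ b, f a b)
    (htracked : ∃ U ∈ Q.filt, Tracks₂ appA Q.app U f) :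
    IsAppMor appA (genFilter appA G) Q.app Q.filt f ↔
      ∀ U ∈ G, relImage f U ∈ Q.filt :=
  statement4_general A B appA G Q f htotal htracked

end PcaPaper
end

section
/- Let (A,φ) and (B,ψ) be PCAs over Set. Equip A × B with the coordinatewise partial application and let φ×ψ = {U × V | U ∈ φ, V ∈ ψ}. Then (A × B, ⟨φ×ψ⟩) is a PCA over Set, the relations κ₀ = {(a,(a,b)) | a ∈ A, b ∈ B} and κ₁ = {(b,(a,b)) | a ∈ A, b ∈ B} are applicative morphisms from (A,φ) and (B,ψ) respectively, and (A × B, ⟨φ×ψ⟩) is a pseudocoproduct: for all applicative morphisms f: (A,φ) → (C,χ) and g: (B,ψ) → (C,χ) there is an applicative morphism h: (A × B, ⟨φ×ψ⟩) → (C,χ) with h∘κ₀ ≤ f, f ≤ h∘κ₀, h∘κ₁ ≤ g and g ≤ h∘κ₁; and for any applicative morphisms h,k: (A × B, ⟨φ×ψ⟩) → (C,χ) with h∘κ₀ ≤ k∘κ₀ and h∘κ₁ ≤ k∘κ₁, one has h ≤ k. -/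
open CategoryTheory

namespace PcaPaper

variable {A B C : Type}

/-!
Rectangles `U ×ˢ V` are closed under coordinatewise application, so the filter they generate
is just their upward closure, and a pair of realizers of a term in `A` and in `B` realizes it in
`A × B`.

The copairing `h` of `f` and `g` relates `(a, b)` to the elements `π c₁ c₂`, where `π` realizes
`λ x y z. z x y`, `f a c₁` and `g b c₂`. Applying such an element to realizers of `λ x y. x` and
`λ x y. y` recovers `c₁` and `c₂`; this gives `h ∘ κ₀ ≃ f` and `h ∘ κ₁ ≃ g`, and `h` is tracked
by pairing the results of the trackers of `f` and `g` on the components.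

For uniqueness, `(a, b)` is obtained by applying an element `m` of `K × K'` (realizers of
`λ x y. x` in `A` and `λ x y. y` in `B`) to `(a, b')` and then to `(a', b)`. The hypotheses turn
an `h`-code of `(a, b)` into `k`-codes of some such `(a, b')` and `(a', b)`, and applying a
tracker of `k` twice, starting from a `k`-code of `m`, gives a `k`-code of `(a, b)`.
-/

lemma appVec_snoc (app : PApp A) (r : A) {k : ℕ} (u : Fin k → A) (x : A) :
    appVec app r (k + 1) (Fin.snoc u x) = (appVec app r k u).bind fun s => app s x := by
  simp only [appVec, Fin.snoc_castSucc, Fin.snoc_last]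

lemma appVec_two (app : PApp A) (r x y : A) :
    appVec app r 2 ![x, y] = (app r x).bind (app · y) :=
  rfl

lemma appVec_two_eq_some {app : PApp A} {r x y c : A} :
    appVec app r 2 ![x, y] = some c ↔ ∃ d, app r x = some d ∧ app d y = some c := by
  rw [appVec_two, Option.bind_eq_some_iff]

lemma appVec_isSome_of_le (app : PApp A) [Nonempty A] (r : A) {m n : ℕ} (hmn : m ≤ n)
    (h : ∀ a : Fin n → A, (appVec app r n a).isSome) (u : Fin m → A) :
    (appVec app r m u).isSome := by
  induction n, hmn using Nat.le_induction with
  | base => exact h u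
  | succ n _ ih =>
    refine ih fun a => isSome_bind_left (f := fun s => app s (Classical.arbitrary A)) ?_
    rw [← appVec_snoc]
    exact h _

lemma Realizes.appVec_isSome {app : PApp A} [Nonempty A] {T : Set A} {n : ℕ}
    {t : Term (n + 1)} (hT : Realizes app T t) {r : A} (hr : r ∈ T) {m : ℕ} (hm : m ≤ n)
    (u : Fin m → A) : (appVec app r m u).isSome :=
  appVec_isSome_of_le app r hm
    (fun a => by simpa using (hT r hr (Fin.snoc a (Classical.arbitrary A))).1) u

def appSets (app : PApp A) (T : Set A) : (k : ℕ) → (Fin k → Set A) → Set A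
  | 0, _ => T
  | k + 1, U => SubApp app (appSets app T k (Fin.init U)) (U (Fin.last k))

lemma exists_of_mem_appSets {app : PApp A} {T : Set A} {k : ℕ} {U : Fin k → Set A} {c : A}
    (hc : c ∈ appSets app T k U) :
    ∃ r ∈ T, ∃ u : Fin k → A, (∀ i, u i ∈ U i) ∧ appVec app r k u = some c := by
  induction k generalizing c with
  | zero => exact ⟨c, hc, Fin.elim0, fun i => i.elim0, rfl⟩
  | succ k ih =>
    obtain ⟨s, hs, v, hv, hsv⟩ := hc
    obtain ⟨r, hr, u, hu, hru⟩ := ih hs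
    refine ⟨r, hr, Fin.snoc u v, Fin.forall_fin_succ'.2 ⟨fun i => ?_, ?_⟩, ?_⟩
    · simpa [Fin.init] using hu i
    · simpa using hv
    · rw [appVec_snoc, hru]
      exact hsv

lemma IsPcaFilter.appSets_mem {app : PApp A} {φ : Set (Set A)} (hφ : IsPcaFilter app φ)
    {T : Set A} (hT : T ∈ φ) {k : ℕ} {U : Fin k → Set A} (hU : ∀ i, U i ∈ φ)
    (hdef : ∀ r ∈ T, ∀ m ≤ k, ∀ u : Fin m → A, (appVec app r m u).isSome) :
    appSets app T k U ∈ φ := by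
  induction k with
  | zero => exact hT
  | succ k ih =>
    refine hφ.appClosed _ (ih (fun i => hU _) fun r hr m hm => hdef r hr m (hm.trans k.le_succ))
      _ (hU _) fun s hs v _ => ?_
    obtain ⟨r, hr, u, -, hru⟩ := exists_of_mem_appSets hs
    simpa [appVec_snoc, hru] using hdef r hr (k + 1) le_rfl (Fin.snoc u v)

lemma Realizes.appSets_mem {P : PCA A} {T : Set A} (hT : T ∈ P.filt) {n : ℕ} {t : Term (n + 1)}
    (hreal : Realizes P.app T t) {m : ℕ} (hm : m ≤ n) {U : Fin m → Set A}
    (hU : ∀ i, U i ∈ P.filt) : appSets P.app T m U ∈ P.filt :=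
  have := P.nonemptyCarrier
  P.isFilter.appSets_mem hT hU fun _ hr _ hk => hreal.appVec_isSome hr (hk.trans hm)

lemma PCA.exists_realizer_with_params (P : PCA A) {n : ℕ} (t : Term (n + 1))
    {U : Fin n → Set A} (hU : ∀ i, U i ∈ P.filt) :
    ∃ W ∈ P.filt, ∀ w ∈ W, ∃ u : Fin n → A, (∀ i, u i ∈ U i) ∧
      ∀ x c, t.eval P.app (Fin.snoc u x) = some c → P.app w x = some c := by
  obtain ⟨T, hT, hreal⟩ := P.complete n t
  refine ⟨_, hreal.appSets_mem hT le_rfl hU, fun w hw => ?_⟩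
  obtain ⟨r, hr, u, hu, hru⟩ := exists_of_mem_appSets hw
  refine ⟨u, hu, fun x c hc => ?_⟩
  simpa [appVec_snoc, hru] using (hreal r hr (Fin.snoc u x)).2 c hc

lemma PCA.exists_realizer₂_with_params (P : PCA A) {n : ℕ} (t : Term (n + 1 + 1))
    {U : Fin n → Set A} (hU : ∀ i, U i ∈ P.filt) :
    ∃ W ∈ P.filt, ∀ w ∈ W, ∃ u : Fin n → A, (∀ i, u i ∈ U i) ∧
      ∀ x y c, t.eval P.app (Fin.snoc (Fin.snoc u x) y) = some c →
        ∃ d, P.app w x = some d ∧ P.app d y = some c := by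
  obtain ⟨T, hT, hreal⟩ := P.complete (n + 1) t
  refine ⟨_, hreal.appSets_mem hT n.le_succ hU, fun w hw => ?_⟩
  obtain ⟨r, hr, u, hu, hru⟩ := exists_of_mem_appSets hw
  refine ⟨u, hu, fun x y c hc => ?_⟩
  exact Option.bind_eq_some_iff.1 <| by
    simpa [appVec_snoc, hru] using (hreal r hr (Fin.snoc (Fin.snoc u x) y)).2 c hc

section Product

lemma Option.map₂_mk_eq_some {α β : Type} {o₁ : Option α} {o₂ : Option β} {c : α × β} :
    Option.map₂ Prod.mk o₁ o₂ = some c ↔ o₁ = some c.1 ∧ o₂ = some c.2 := by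
  cases o₁ <;> cases o₂ <;> simp [Prod.ext_iff]

lemma Option.isSome_map₂_mk {α β : Type} {o₁ : Option α} {o₂ : Option β} :
    (Option.map₂ Prod.mk o₁ o₂).isSome ↔ o₁.isSome ∧ o₂.isSome := by
  cases o₁ <;> cases o₂ <;> simp

lemma Option.map₂_mk_bind {α β α' β' : Type} (o₁ : Option α) (o₂ : Option β)
    (f₁ : α → Option α') (f₂ : β → Option β') :
    (Option.map₂ Prod.mk o₁ o₂).bind (fun p => Option.map₂ Prod.mk (f₁ p.1) (f₂ p.2)) =
      Option.map₂ Prod.mk (o₁.bind f₁) (o₂.bind f₂) := by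
  cases o₁ <;> cases o₂ <;> simp

lemma Option.map₂_mk_bind_bind {α β : Type} (a₁ a₂ : Option α) (b₁ b₂ : Option β)
    (f : α → α → Option α) (g : β → β → Option β) :
    ((Option.map₂ Prod.mk a₁ b₁).bind fun p => (Option.map₂ Prod.mk a₂ b₂).bind fun q =>
        Option.map₂ Prod.mk (f p.1 q.1) (g p.2 q.2)) =
      Option.map₂ Prod.mk (a₁.bind fun x => a₂.bind (f x)) (b₁.bind fun y => b₂.bind (g y)) := by
  cases a₁ <;> cases b₁ <;> cases a₂ <;> cases b₂ <;> simp

variable (pa : PApp A) (pb : PApp B)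

lemma prodApp_eq_map₂ (p q : A × B) :
    prodApp pa pb p q = Option.map₂ Prod.mk (pa p.1 q.1) (pb p.2 q.2) := by
  simp only [prodApp, Option.map₂]
  cases pb p.2 q.2 <;> rfl

lemma prodApp_eq_some {p q c : A × B} :
    prodApp pa pb p q = some c ↔ pa p.1 q.1 = some c.1 ∧ pb p.2 q.2 = some c.2 := by
  rw [prodApp_eq_map₂, Option.map₂_mk_eq_some]

lemma Term.eval_prodApp {n : ℕ} (t : Term n) (ρ : Fin n → A × B) :
    t.eval (prodApp pa pb) ρ =
      Option.map₂ Prod.mk (t.eval pa fun i => (ρ i).1) (t.eval pb fun i => (ρ i).2) := by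
  induction t with
  | var i => simp [Term.eval]
  | op s t ihs iht =>
    simp only [Term.eval, ihs, iht, prodApp_eq_map₂]
    exact Option.map₂_mk_bind_bind ..

lemma appVec_prodApp (r : A × B) {k : ℕ} (a : Fin k → A × B) :
    appVec (prodApp pa pb) r k a =
      Option.map₂ Prod.mk (appVec pa r.1 k fun i => (a i).1)
        (appVec pb r.2 k fun i => (a i).2) := by
  induction k with
  | zero => rfl
  | succ k ih =>
    simp only [appVec, ih, prodApp_eq_map₂]
    exact Option.map₂_mk_bind _ _ (pa · (a (Fin.last k)).1) (pb · (a (Fin.last k)).2)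

lemma subDef_prod {U U' : Set A} {V V' : Set B} (hU' : U'.Nonempty) (hV' : V'.Nonempty)
    (hU : U.Nonempty) (hV : V.Nonempty) (h : SubDef (prodApp pa pb) (U ×ˢ V) (U' ×ˢ V')) :
    SubDef pa U U' ∧ SubDef pb V V' := by
  obtain ⟨a, ha⟩ := hU
  obtain ⟨a', ha'⟩ := hU'
  obtain ⟨b, hb⟩ := hV
  obtain ⟨b', hb'⟩ := hV'
  constructor
  · intro x hx x' hx'
    have := h (x, b) ⟨hx, hb⟩ (x', b') ⟨hx', hb'⟩
    rw [prodApp_eq_map₂, Option.isSome_map₂_mk] at this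
    exact this.1
  · intro y hy y' hy'
    have := h (a, y) ⟨ha, hy⟩ (a', y') ⟨ha', hy'⟩
    rw [prodApp_eq_map₂, Option.isSome_map₂_mk] at this
    exact this.2

lemma subApp_prod_subset {U U' : Set A} {V V' : Set B} :
    SubApp pa U U' ×ˢ SubApp pb V V' ⊆ SubApp (prodApp pa pb) (U ×ˢ V) (U' ×ˢ V') := by
  rintro ⟨c, d⟩ ⟨⟨a, ha, a', ha', hc⟩, ⟨b, hb, b', hb', hd⟩⟩
  exact ⟨(a, b), ⟨ha, hb⟩, (a', b'), ⟨ha', hb'⟩, (prodApp_eq_some pa pb).2 ⟨hc, hd⟩⟩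

lemma subApp_mono {app : PApp A} {U U' V V' : Set A} (hU : U ⊆ U') (hV : V ⊆ V') :
    SubApp app U V ⊆ SubApp app U' V' := by
  rintro c ⟨a, ha, b, hb, hab⟩
  exact ⟨a, hU ha, b, hV hb, hab⟩

lemma IsPcaFilter.prod {φ : Set (Set A)} {ψ : Set (Set B)} (hφ : IsPcaFilter pa φ)
    (hψ : IsPcaFilter pb ψ) :
    IsPcaFilter (prodApp pa pb) {W | ∃ U ∈ φ, ∃ V ∈ ψ, U ×ˢ V ⊆ W} where
  nonempty := by
    rintro W ⟨U, hU, V, hV, hW⟩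
    exact ((hφ.nonempty U hU).prod (hψ.nonempty V hV)).mono hW
  upward := by
    rintro W ⟨U, hU, V, hV, hW⟩ W' hWW'
    exact ⟨U, hU, V, hV, hW.trans hWW'⟩
  appClosed := by
    rintro W ⟨U, hU, V, hV, hW⟩ W' ⟨U', hU', V', hV', hW'⟩ hdef
    obtain ⟨hUU', hVV'⟩ := subDef_prod pa pb (hφ.nonempty U' hU') (hψ.nonempty V' hV')
      (hφ.nonempty U hU) (hψ.nonempty V hV) fun p hp q hq => hdef p (hW hp) q (hW' hq)
    exact ⟨_, hφ.appClosed U hU U' hU' hUU', _, hψ.appClosed V hV V' hV' hVV',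
      (subApp_prod_subset pa pb).trans (subApp_mono hW hW')⟩

lemma Realizes.prod {U : Set A} {V : Set B} {n : ℕ} {t : Term (n + 1)} (hU : Realizes pa U t)
    (hV : Realizes pb V t) : Realizes (prodApp pa pb) (U ×ˢ V) t := by
  rintro r ⟨hr₁, hr₂⟩ a
  refine ⟨?_, fun c hc => ?_⟩
  · rw [appVec_prodApp, Option.isSome_map₂_mk]
    exact ⟨(hU _ hr₁ (Prod.fst ∘ a)).1, (hV _ hr₂ (Prod.snd ∘ a)).1⟩
  · rw [Term.eval_prodApp, Option.map₂_mk_eq_some] at hc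
    rw [appVec_prodApp, Option.map₂_mk_eq_some]
    exact ⟨(hU _ hr₁ (Prod.fst ∘ a)).2 _ hc.1, (hV _ hr₂ (Prod.snd ∘ a)).2 _ hc.2⟩

end Product

lemma mem_prodFilt {P : PCA A} {Q : PCA B} {W : Set (A × B)} :
    W ∈ prodFilt P Q ↔ ∃ U ∈ P.filt, ∃ V ∈ Q.filt, U ×ˢ V ⊆ W := by
  constructor
  · intro hW
    refine hW _ ⟨P.isFilter.prod _ _ Q.isFilter, ?_⟩
    rintro _ ⟨U, hU, V, hV, rfl⟩
    exact ⟨U, hU, V, hV, subset_rfl⟩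
  · rintro ⟨U, hU, V, hV, hW⟩ Ψ ⟨hΨ, hG⟩
    exact hΨ.upward _ (hG ⟨U, hU, V, hV, rfl⟩) _ hW

lemma prod_mem_prodFilt {P : PCA A} {Q : PCA B} {U : Set A} {V : Set B} (hU : U ∈ P.filt)
    (hV : V ∈ Q.filt) : U ×ˢ V ∈ prodFilt P Q :=
  mem_prodFilt.2 ⟨U, hU, V, hV, subset_rfl⟩

lemma isPcaFilter_prodFilt (P : PCA A) (Q : PCA B) :
    IsPcaFilter (prodApp P.app Q.app) (prodFilt P Q) := by
  convert P.isFilter.prod _ _ Q.isFilter using 1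
  ext W
  exact mem_prodFilt

lemma combComplete_prodFilt (P : PCA A) (Q : PCA B) :
    CombComplete (prodApp P.app Q.app) (prodFilt P Q) := by
  intro n t
  obtain ⟨U, hU, hrU⟩ := P.complete n t
  obtain ⟨V, hV, hrV⟩ := Q.complete n t
  exact ⟨U ×ˢ V, prod_mem_prodFilt hU hV, hrU.prod _ _ hrV⟩

local infixl:100 " ⬝ " => Term.op

def appTerm : Term 2 := .var 0 ⬝ .var 1

def fstTerm : Term 2 := .var 0

def sndTerm : Term 2 := .var 1

def pairTerm : Term 3 := .var 2 ⬝ .var 0 ⬝ .var 1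

noncomputable def PCA.realizer (P : PCA A) {n : ℕ} (t : Term (n + 1)) : Set A :=
  (P.complete n t).choose

lemma PCA.realizer_mem (P : PCA A) {n : ℕ} (t : Term (n + 1)) : P.realizer t ∈ P.filt :=
  (P.complete n t).choose_spec.1

lemma PCA.realizes_realizer (P : PCA A) {n : ℕ} (t : Term (n + 1)) :
    Realizes P.app (P.realizer t) t :=
  (P.complete n t).choose_spec.2

lemma PCA.appVec_realizer_app (P : PCA A) {r x y c : A} (hr : r ∈ P.realizer appTerm)
    (h : P.app x y = some c) : appVec P.app r 2 ![x, y] = some c :=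
  (P.realizes_realizer appTerm r hr ![x, y]).2 c (by simpa [Term.eval, appTerm] using h)

lemma PCA.appVec_realizer_fst (P : PCA A) {r : A} (hr : r ∈ P.realizer fstTerm) (x y : A) :
    appVec P.app r 2 ![x, y] = some x :=
  (P.realizes_realizer fstTerm r hr ![x, y]).2 x (by simp [Term.eval, fstTerm])

lemma PCA.appVec_realizer_snd (P : PCA A) {r : A} (hr : r ∈ P.realizer sndTerm) (x y : A) :
    appVec P.app r 2 ![x, y] = some y :=
  (P.realizes_realizer sndTerm r hr ![x, y]).2 y (by simp [Term.eval, sndTerm])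

lemma isAppMor_inl (P : PCA A) (Q : PCA B) :
    IsAppMor P.app P.filt (prodApp P.app Q.app) (prodFilt P Q) (fun a p => p.1 = a) := by
  refine ⟨fun a => ⟨(a, Q.nonemptyCarrier.some), rfl⟩, ⟨P.realizer appTerm ×ˢ Q.realizer sndTerm,
    prod_mem_prodFilt (P.realizer_mem _) (Q.realizer_mem _), ?_⟩,
    fun W hW => mem_prodFilt.2 ⟨W, hW, Set.univ, univ_mem_filt Q, ?_⟩⟩
  · rintro a a' c hc p p' rfl rfl r ⟨hr₁, hr₂⟩
    obtain ⟨d₁, hd₁, hd₁'⟩ := appVec_two_eq_some.1 (P.appVec_realizer_app hr₁ hc)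
    obtain ⟨d₂, hd₂, hd₂'⟩ := appVec_two_eq_some.1 (Q.appVec_realizer_snd hr₂ p.2 p'.2)
    exact ⟨(d₁, d₂), (c, p'.2), (prodApp_eq_some ..).2 ⟨hd₁, hd₂⟩,
      (prodApp_eq_some ..).2 ⟨hd₁', hd₂'⟩, rfl⟩
  · rintro p ⟨ha, -⟩
    exact ⟨p.1, ha, rfl⟩

lemma isAppMor_inr (P : PCA A) (Q : PCA B) :
    IsAppMor Q.app Q.filt (prodApp P.app Q.app) (prodFilt P Q) (fun b p => p.2 = b) := by
  refine ⟨fun b => ⟨(P.nonemptyCarrier.some, b), rfl⟩, ⟨P.realizer sndTerm ×ˢ Q.realizer appTerm,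
    prod_mem_prodFilt (P.realizer_mem _) (Q.realizer_mem _), ?_⟩,
    fun W hW => mem_prodFilt.2 ⟨Set.univ, univ_mem_filt P, W, hW, ?_⟩⟩
  · rintro b b' c hc p p' rfl rfl r ⟨hr₁, hr₂⟩
    obtain ⟨d₁, hd₁, hd₁'⟩ := appVec_two_eq_some.1 (P.appVec_realizer_snd hr₁ p.1 p'.1)
    obtain ⟨d₂, hd₂, hd₂'⟩ := appVec_two_eq_some.1 (Q.appVec_realizer_app hr₂ hc)
    exact ⟨(d₁, d₂), (p'.1, c), (prodApp_eq_some ..).2 ⟨hd₁, hd₂⟩,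
      (prodApp_eq_some ..).2 ⟨hd₁', hd₂'⟩, rfl⟩
  · rintro p ⟨-, hb⟩
    exact ⟨p.2, hb, rfl⟩

section Copair

variable {R : PCA C} {f : A → C → Prop} {g : B → C → Prop}

def copair (R : PCA C) (f : A → C → Prop) (g : B → C → Prop) (p : A × B) (c : C) : Prop :=
  ∃ π ∈ R.realizer pairTerm, ∃ c₁ c₂,
    f p.1 c₁ ∧ g p.2 c₂ ∧ appVec R.app π 2 ![c₁, c₂] = some c

lemma exists_appVec_pair {π : C} (hπ : π ∈ R.realizer pairTerm) (x y : C) :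
    ∃ c, appVec R.app π 2 ![x, y] = some c :=
  have := R.nonemptyCarrier
  Option.isSome_iff_exists.1 ((R.realizes_realizer _).appVec_isSome hπ le_rfl ![x, y])

lemma copair_total (hf : ∀ a, ∃ c, f a c) (hg : ∀ b, ∃ c, g b c) (p : A × B) :
    ∃ c, copair R f g p c := by
  obtain ⟨π, hπ⟩ := R.isFilter.nonempty _ (R.realizer_mem _)
  obtain ⟨c₁, h₁⟩ := hf p.1
  obtain ⟨c₂, h₂⟩ := hg p.2
  obtain ⟨c, hc⟩ := exists_appVec_pair hπ c₁ c₂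
  exact ⟨c, π, hπ, c₁, c₂, h₁, h₂, hc⟩

lemma copair_app_fst {p : A × B} {c : C} (h : copair R f g p c) {k : C}
    (hk : k ∈ R.realizer fstTerm) : ∃ c₁, R.app c k = some c₁ ∧ f p.1 c₁ := by
  obtain ⟨π, hπ, c₁, c₂, h₁, -, hc⟩ := h
  have hk₁ := R.appVec_realizer_fst hk c₁ c₂
  rw [appVec_two] at hk₁
  have : (appVec R.app π 2 ![c₁, c₂]).bind (R.app · k) = some c₁ :=
    (R.realizes_realizer _ π hπ ![c₁, c₂, k]).2 c₁ (by simpa [Term.eval, pairTerm] using hk₁)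
  rw [hc] at this
  exact ⟨c₁, this, h₁⟩

lemma copair_app_snd {p : A × B} {c : C} (h : copair R f g p c) {k : C}
    (hk : k ∈ R.realizer sndTerm) : ∃ c₂, R.app c k = some c₂ ∧ g p.2 c₂ := by
  obtain ⟨π, hπ, c₁, c₂, -, h₂, hc⟩ := h
  have hk₂ := R.appVec_realizer_snd hk c₁ c₂
  rw [appVec_two] at hk₂
  have : (appVec R.app π 2 ![c₁, c₂]).bind (R.app · k) = some c₂ :=
    (R.realizes_realizer _ π hπ ![c₁, c₂, k]).2 c₂ (by simpa [Term.eval, pairTerm] using hk₂)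
  rw [hc] at this
  exact ⟨c₂, this, h₂⟩

lemma exists_tracks₂_copair {pa : PApp A} {pb : PApp B} {Uf Ug : Set C} (hUf : Uf ∈ R.filt)
    (hUg : Ug ∈ R.filt) (hf : Tracks₂ pa R.app Uf f) (hg : Tracks₂ pb R.app Ug g) :
    ∃ W ∈ R.filt, Tracks₂ (prodApp pa pb) R.app W (copair R f g) := by
  -- `λ x y. π (t_f (x k) (y k)) (t_g (x k') (y k'))`
  obtain ⟨W, hW, hWs⟩ := R.exists_realizer₂_with_params
    (.var 2 ⬝ (.var 0 ⬝ (.var 5 ⬝ .var 3) ⬝ (.var 6 ⬝ .var 3)) ⬝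
      (.var 1 ⬝ (.var 5 ⬝ .var 4) ⬝ (.var 6 ⬝ .var 4)))
    (U := ![Uf, Ug, R.realizer pairTerm, R.realizer fstTerm, R.realizer sndTerm])
    (by simp [Fin.forall_fin_succ, hUf, hUg, PCA.realizer_mem])
  refine ⟨W, hW, fun p p' q hq c c' hc hc' w hw => ?_⟩
  obtain ⟨u, hu, key⟩ := hWs w hw
  obtain ⟨hq₁, hq₂⟩ := (prodApp_eq_some pa pb).1 hq
  obtain ⟨c₁, hc₁, hfc₁⟩ := copair_app_fst hc (hu 3)
  obtain ⟨c₁', hc₁', hfc₁'⟩ := copair_app_fst hc' (hu 3)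
  obtain ⟨c₂, hc₂, hgc₂⟩ := copair_app_snd hc (hu 4)
  obtain ⟨c₂', hc₂', hgc₂'⟩ := copair_app_snd hc' (hu 4)
  obtain ⟨d₁, e₁, hd₁, he₁, hfe₁⟩ := hf _ _ _ hq₁ _ _ hfc₁ hfc₁' (u 0) (hu 0)
  obtain ⟨d₂, e₂, hd₂, he₂, hge₂⟩ := hg _ _ _ hq₂ _ _ hgc₂ hgc₂' (u 1) (hu 1)
  obtain ⟨e, he⟩ := exists_appVec_pair (hu 2) e₁ e₂
  obtain ⟨d, hwd, hde⟩ := key c c' e <| by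
    rw [appVec_two] at he
    simpa [Term.eval, Fin.snoc, Fin.castLT, Fin.castPred, hc₁, hc₁', hc₂, hc₂', hd₁, he₁, hd₂,
      he₂] using he
  exact ⟨d, e, hwd, hde, u 2, hu 2, e₁, e₂, hfe₁, hge₂, he⟩

lemma relImage_copair_mem {P : PCA A} {Q : PCA B} (hf : ∀ U ∈ P.filt, relImage f U ∈ R.filt)
    (hg : ∀ V ∈ Q.filt, relImage g V ∈ R.filt) {W : Set (A × B)} (hW : W ∈ prodFilt P Q) :
    relImage (copair R f g) W ∈ R.filt := by
  obtain ⟨U, hU, V, hV, hUV⟩ := mem_prodFilt.1 hW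
  refine R.isFilter.upward _ ((R.realizes_realizer pairTerm).appSets_mem (R.realizer_mem _)
    le_rfl (U := ![relImage f U, relImage g V]) ?_) _ fun c hc => ?_
  · simp [Fin.forall_fin_succ, hf U hU, hg V hV]
  · obtain ⟨π, hπ, u, hu, hπu⟩ := exists_of_mem_appSets hc
    obtain ⟨a, ha, hfa⟩ := hu 0
    obtain ⟨b, hb, hgb⟩ := hu 1
    exact ⟨(a, b), hUV ⟨ha, hb⟩, π, hπ, u 0, u 1, hfa, hgb, hπu⟩

lemma isAppMor_copair {P : PCA A} {Q : PCA B} (hf : IsAppMor P.app P.filt R.app R.filt f)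
    (hg : IsAppMor Q.app Q.filt R.app R.filt g) :
    IsAppMor (prodApp P.app Q.app) (prodFilt P Q) R.app R.filt (copair R f g) := by
  obtain ⟨Uf, hUf, htf⟩ := hf.tracked
  obtain ⟨Ug, hUg, htg⟩ := hg.tracked
  exact ⟨copair_total hf.total hg.total, exists_tracks₂_copair hUf hUg htf htg,
    fun _ => relImage_copair_mem hf.image hg.image⟩

lemma relLe_comp_of_proj {X Y : Type} {h : X → C → Prop} {f : Y → C → Prop} (π : X → Y)
    {K : Set C} (hK : K ∈ R.filt)
    (hproj : ∀ x c, h x c → ∀ k ∈ K, ∃ c', R.app c k = some c' ∧ f (π x) c') :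
    RelLe R.app R.filt (RelComp h fun y x => π x = y) f := by
  obtain ⟨W, hW, hWs⟩ := R.exists_realizer_with_params (.var 1 ⬝ .var 0) (U := ![K])
    (by simpa using hK)
  refine ⟨W, hW, ?_⟩
  rintro y c ⟨x, rfl, hxc⟩ w hw
  obtain ⟨u, hu, key⟩ := hWs w hw
  obtain ⟨c', hc', hfc'⟩ := hproj x c hxc (u 0) (hu 0)
  exact ⟨c', key c c' (by simpa [Term.eval, Fin.snoc] using hc'), hfc'⟩

lemma relLe_copair_comp_inl : RelLe R.app R.filt (RelComp (copair R f g) fun a p => p.1 = a) f :=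
  relLe_comp_of_proj Prod.fst (R.realizer_mem fstTerm) fun _ _ h _ hk => copair_app_fst h hk

lemma relLe_copair_comp_inr : RelLe R.app R.filt (RelComp (copair R f g) fun b p => p.2 = b) g :=
  relLe_comp_of_proj Prod.snd (R.realizer_mem sndTerm) fun _ _ h _ hk => copair_app_snd h hk

lemma relLe_comp_inl_copair (hg : relImage g Set.univ ∈ R.filt) :
    RelLe R.app R.filt f (RelComp (copair R f g) fun a p => p.1 = a) := by
  obtain ⟨W, hW, hWs⟩ := R.exists_realizer_with_params (.var 0 ⬝ .var 2 ⬝ .var 1)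
    (U := ![R.realizer pairTerm, relImage g Set.univ])
    (by simp [Fin.forall_fin_succ, hg, PCA.realizer_mem])
  refine ⟨W, hW, fun a c₁ h₁ w hw => ?_⟩
  obtain ⟨u, hu, key⟩ := hWs w hw
  obtain ⟨b, -, h₂⟩ := hu 1
  obtain ⟨c, hc⟩ := exists_appVec_pair (hu 0) c₁ (u 1)
  refine ⟨c, key c₁ c ?_, (a, b), rfl, u 0, hu 0, c₁, u 1, h₁, h₂, hc⟩
  rw [appVec_two] at hc
  simpa [Term.eval, Fin.snoc] using hc

lemma relLe_comp_inr_copair (hf : relImage f Set.univ ∈ R.filt) :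
    RelLe R.app R.filt g (RelComp (copair R f g) fun b p => p.2 = b) := by
  obtain ⟨W, hW, hWs⟩ := R.exists_realizer_with_params (.var 0 ⬝ .var 1 ⬝ .var 2)
    (U := ![R.realizer pairTerm, relImage f Set.univ])
    (by simp [Fin.forall_fin_succ, hf, PCA.realizer_mem])
  refine ⟨W, hW, fun b c₂ h₂ w hw => ?_⟩
  obtain ⟨u, hu, key⟩ := hWs w hw
  obtain ⟨a, -, h₁⟩ := hu 1
  obtain ⟨c, hc⟩ := exists_appVec_pair (hu 0) (u 1) c₂
  refine ⟨c, key c₂ c ?_, (a, b), rfl, u 0, hu 0, u 1, c₂, h₁, h₂, hc⟩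
  rw [appVec_two] at hc
  simpa [Term.eval, Fin.snoc] using hc

end Copair

lemma exists_prodApp_fst_snd {P : PCA A} {Q : PCA B} {m : A × B}
    (hm : m ∈ P.realizer fstTerm ×ˢ Q.realizer sndTerm) (p q : A × B) :
    ∃ d, prodApp P.app Q.app m p = some d ∧ prodApp P.app Q.app d q = some (p.1, q.2) := by
  obtain ⟨d₁, h₁, h₁'⟩ := appVec_two_eq_some.1 (P.appVec_realizer_fst hm.1 p.1 q.1)
  obtain ⟨d₂, h₂, h₂'⟩ := appVec_two_eq_some.1 (Q.appVec_realizer_snd hm.2 p.2 q.2)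
  exact ⟨(d₁, d₂), (prodApp_eq_some ..).2 ⟨h₁, h₂⟩, (prodApp_eq_some ..).2 ⟨h₁', h₂'⟩⟩

lemma relLe_of_comp_inl_of_comp_inr {P : PCA A} {Q : PCA B} {R : PCA C}
    {h k : A × B → C → Prop} (hk : IsAppMor (prodApp P.app Q.app) (prodFilt P Q) R.app R.filt k)
    (h₀ : RelLe R.app R.filt (RelComp h fun a p => p.1 = a) (RelComp k fun a p => p.1 = a))
    (h₁ : RelLe R.app R.filt (RelComp h fun b p => p.2 = b) (RelComp k fun b p => p.2 = b)) :
    RelLe R.app R.filt h k := by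
  obtain ⟨W₀, hW₀, hW₀s⟩ := h₀
  obtain ⟨W₁, hW₁, hW₁s⟩ := h₁
  obtain ⟨T, hT, hTs⟩ := hk.tracked
  let M := P.realizer fstTerm ×ˢ Q.realizer sndTerm
  have hM : relImage k M ∈ R.filt :=
    hk.image _ (prod_mem_prodFilt (P.realizer_mem _) (Q.realizer_mem _))
  -- `λ x. t (t m (w₀ x)) (w₁ x)`
  obtain ⟨W, hW, hWs⟩ := R.exists_realizer_with_params
    (.var 0 ⬝ (.var 0 ⬝ .var 1 ⬝ (.var 2 ⬝ .var 4)) ⬝ (.var 3 ⬝ .var 4))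
    (U := ![T, relImage k M, W₀, W₁]) (by simp [Fin.forall_fin_succ, hT, hM, hW₀, hW₁])
  refine ⟨W, hW, fun p c hpc w hw => ?_⟩
  obtain ⟨u, hu, key⟩ := hWs w hw
  obtain ⟨c₀, hc₀, p₀, hp₀, hkp₀⟩ := hW₀s p.1 c ⟨p, rfl, hpc⟩ (u 2) (hu 2)
  obtain ⟨c₁, hc₁, p₁, hp₁, hkp₁⟩ := hW₁s p.2 c ⟨p, rfl, hpc⟩ (u 3) (hu 3)
  obtain ⟨m, hm, hkm⟩ := hu 1
  obtain ⟨d, hmd, hdp⟩ := exists_prodApp_fst_snd hm p₀ p₁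
  rw [hp₀, hp₁] at hdp
  obtain ⟨e₀, e₁, he₀, he₁, hke₁⟩ := hTs _ _ _ hmd _ _ hkm hkp₀ (u 0) (hu 0)
  obtain ⟨e₂, e₃, he₂, he₃, hke₃⟩ := hTs _ _ _ hdp _ _ hke₁ hkp₁ (u 0) (hu 0)
  exact ⟨e₃, key c e₃ (by simp [Term.eval, Fin.snoc, Fin.castLT, Fin.castPred, hc₀, hc₁, he₀,
    he₁, he₂, he₃]), hke₃⟩

/-- The product `A × B` with the coordinatewise application and the filter
`⟨φ × ψ⟩` is a PCA, the coprojections `κ₀, κ₁` are applicative morphisms, and this PCA is a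
pseudocoproduct of `(A,φ)` and `(B,ψ)` in the preorder-enriched category of PCAs over `Set`. -/
theorem statement5 (A B : Type) (P : PCA A) (Q : PCA B) :
    IsPcaFilter (prodApp P.app Q.app) (prodFilt P Q) ∧
    CombComplete (prodApp P.app Q.app) (prodFilt P Q) ∧
    IsAppMor P.app P.filt (prodApp P.app Q.app) (prodFilt P Q)
      (fun a p => p.1 = a) ∧
    IsAppMor Q.app Q.filt (prodApp P.app Q.app) (prodFilt P Q)
      (fun b p => p.2 = b) ∧
    (∀ (C : Type) (R : PCA C) (f : A → C → Prop) (g : B → C → Prop),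
      IsAppMor P.app P.filt R.app R.filt f →
      IsAppMor Q.app Q.filt R.app R.filt g →
      ∃ h : A × B → C → Prop,
        IsAppMor (prodApp P.app Q.app) (prodFilt P Q) R.app R.filt h ∧
        RelLe R.app R.filt (RelComp h fun a p => p.1 = a) f ∧
        RelLe R.app R.filt f (RelComp h fun a p => p.1 = a) ∧
        RelLe R.app R.filt (RelComp h fun b p => p.2 = b) g ∧
        RelLe R.app R.filt g (RelComp h fun b p => p.2 = b)) ∧
    (∀ (C : Type) (R : PCA C) (h k : A × B → C → Prop),
      IsAppMor (prodApp P.app Q.app) (prodFilt P Q) R.app R.filt h →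
      IsAppMor (prodApp P.app Q.app) (prodFilt P Q) R.app R.filt k →
      RelLe R.app R.filt (RelComp h fun a p => p.1 = a) (RelComp k fun a p => p.1 = a) →
      RelLe R.app R.filt (RelComp h fun b p => p.2 = b) (RelComp k fun b p => p.2 = b) →
      RelLe R.app R.filt h k) := by
  refine ⟨isPcaFilter_prodFilt P Q, combComplete_prodFilt P Q, isAppMor_inl P Q,
    isAppMor_inr P Q, fun C R f g hf hg => ?_, fun C R h k _ hk => relLe_of_comp_inl_of_comp_inr hk⟩
  have hfU := hf.image _ (univ_mem_filt P)
  have hgU := hg.image _ (univ_mem_filt Q)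
  exact ⟨copair R f g, isAppMor_copair hf hg, relLe_copair_comp_inl, relLe_comp_inl_copair hgU,
    relLe_copair_comp_inr, relLe_comp_inr_copair hfU⟩

end PcaPaper
end

section
/- Let (A,φ) and (B,ψ) be PCAs over Set. Then: (i) for every applicative morphism f: (A,φ) → (B,ψ), Asm(f) is a well-defined functor Asm(A,φ) → Asm(B,ψ); (ii) Asm(δ_A) is the identity functor and Asm(g∘f) = Asm(g)∘Asm(f) for composable applicative morphisms; (iii) if f, g: (A,φ) → (B,ψ) are applicative morphisms with f ≤ g, then the identity functions on underlying sets are the components of a natural transformation Asm(f) ⇒ Asm(g). -/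
open CategoryTheory

namespace PcaPaper

variable {A B C : Type}

/-- `Asm(f)` leaves underlying maps untouched, so with this lemma `Functor.hext` reduces
equalities of such functors to equalities of objects. -/
lemma Asm.hom_heq {P : PCA A} {X X' Y Y' : Asm P} (hX : X = X') (hY : Y = Y')
    {g : X ⟶ Y} {g' : X' ⟶ Y'} (h : HEq g.1 g'.1) : HEq g g' := by
  subst hX hY
  exact heq_of_eq (Subtype.ext (eq_of_heq h))

lemma asmObj_relId (P : PCA A) (htot : ∀ a, ∃ b, relId A a b) (X : Asm P) :
    asmObj P P (relId A) htot X = X := by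
  cases X
  simp [asmObj, relId]

lemma asmObj_relComp (P : PCA A) (Q : PCA B) (R : PCA C) {f : A → B → Prop}
    {g : B → C → Prop} (hf : ∀ a, ∃ b, f a b) (hg : ∀ b, ∃ c, g b c)
    (hgf : ∀ a, ∃ c, RelComp g f a c) (X : Asm P) :
    asmObj P R (RelComp g f) hgf X = asmObj Q R g hg (asmObj P Q f hf X) := by
  simp only [asmObj, RelComp, Asm.mk.injEq, heq_eq_eq, true_and]
  funext x c
  exact propext ⟨fun ⟨a, ha, b, hab, hbc⟩ => ⟨b, ⟨a, ha, hab⟩, hbc⟩,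
    fun ⟨b, ⟨a, ha, hab⟩, hbc⟩ => ⟨a, ha, b, hab, hbc⟩⟩

lemma asmFunctor_relId {P : PCA A} (hδ : IsAppMor P.app P.filt P.app P.filt (relId A)) :
    asmFunctor hδ = 𝟭 (Asm P) :=
  Functor.hext (asmObj_relId P hδ.total) fun _ _ _ =>
    Asm.hom_heq (asmObj_relId P hδ.total _) (asmObj_relId P hδ.total _) HEq.rfl

lemma asmFunctor_relComp {P : PCA A} {Q : PCA B} {R : PCA C} {f : A → B → Prop}
    {g : B → C → Prop} (hf : IsAppMor P.app P.filt Q.app Q.filt f)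
    (hg : IsAppMor Q.app Q.filt R.app R.filt g)
    (hgf : IsAppMor P.app P.filt R.app R.filt (RelComp g f)) :
    asmFunctor hgf = asmFunctor hf ⋙ asmFunctor hg :=
  have hobj := asmObj_relComp P Q R hf.total hg.total hgf.total
  Functor.hext hobj fun _ _ _ => Asm.hom_heq (hobj _) (hobj _) HEq.rfl

def asmNatTransOfRelLe {P : PCA A} {Q : PCA B} {f g : A → B → Prop}
    (hf : IsAppMor P.app P.filt Q.app Q.filt f) (hg : IsAppMor P.app P.filt Q.app Q.filt g)
    (hle : RelLe Q.app Q.filt f g) : asmFunctor hf ⟶ asmFunctor hg where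
  app X := ⟨fun x => x, by
    obtain ⟨U, hU, hUle⟩ := hle
    refine ⟨U, hU, ?_⟩
    rintro x b r ⟨a, hxa, hab⟩ hr
    obtain ⟨c, hc, hac⟩ := hUle a b hab r hr
    exact ⟨c, hc, a, hxa, hac⟩⟩
  naturality _ _ _ := Subtype.ext rfl

/-- (i) For every applicative morphism `f : (A,φ) → (B,ψ)`, `Asm(f)` is a
well-defined functor (every tracked map stays tracked); (ii) `Asm(δ_A)` is the identity
functor, and `Asm(g ∘ f) = Asm(g) ∘ Asm(f)`; (iii) if `f ≤ g` then the identity functions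
are the components of a natural transformation `Asm(f) ⇒ Asm(g)`. -/
theorem statement7 (A B C : Type) (P : PCA A) (Q : PCA B) (R : PCA C) :
    (∀ (f : A → B → Prop) (hf : IsAppMor P.app P.filt Q.app Q.filt f)
        (X Y : Asm P) (g : X.carrier → Y.carrier),
        (∃ U ∈ P.filt, Tracks P U g) →
        ∃ W ∈ Q.filt,
          Tracks Q (X := asmObj P Q f hf.total X) (Y := asmObj P Q f hf.total Y) W g) ∧
    (∀ hδ : IsAppMor P.app P.filt P.app P.filt (relId A),
        asmFunctor hδ = 𝟭 (Asm P)) ∧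
    (∀ (f : A → B → Prop) (g : B → C → Prop)
        (hf : IsAppMor P.app P.filt Q.app Q.filt f)
        (hg : IsAppMor Q.app Q.filt R.app R.filt g)
        (hgf : IsAppMor P.app P.filt R.app R.filt (RelComp g f)),
        asmFunctor hgf = asmFunctor hf ⋙ asmFunctor hg) ∧
    (∀ (f g : A → B → Prop)
        (hf : IsAppMor P.app P.filt Q.app Q.filt f)
        (hg : IsAppMor P.app P.filt Q.app Q.filt g),
        RelLe Q.app Q.filt f g →
        ∃ η : asmFunctor hf ⟶ asmFunctor hg, ∀ X : Asm P, (η.app X).1 = fun x => x) := by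
  exact ⟨fun _ hf _ _ g hg => tracks_asmMap hf g hg, asmFunctor_relId,
    fun _ _ => asmFunctor_relComp,
    fun _ _ hf hg hle => ⟨asmNatTransOfRelLe hf hg hle, fun _ => rfl⟩⟩

end PcaPaper
end
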